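/- arXiv:1811.02503 — 4 statements merged into one kernel-verified Lean document; each statement's English description precedes it below -/
import Mathlib

section
/- (Equation (4) in the proof of Theorem 1.) Let V be a finite set and (A, S, B) a partition of V with A, B, S nonempty. Let n₁, n₂ > 0 be real numbers and let M, M⁽¹⁾, M⁽²⁾ be symmetric positive definite V×V matrices, each of whose inverse has zero (A,B) block. For nonempty U ⊆ V set λ(U) := n₁ · log(det M_U / det M⁽¹⁾_U) + n₂ · log(det M_U / det M⁽²⁾_U), and for a symmetric positive definite V×V matrix N let K_B(N) := (N_B − N_{B,S} N_S⁻¹ N_{S,B})⁻¹. Then λ(V) = λ(A ∪ S) + n₁ · log(det K_B(M⁽¹⁾) / det K_B(M)) + n₂ · log(det K_B(M⁽²⁾) / det K_B(M)). -/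
open Matrix

/-- Sub-matrix of `M` with rows indexed by `A` and columns indexed by `B`. -/
def msub {V : Type*} [Fintype V] [DecidableEq V] (M : Matrix V V ℝ) (A B : Finset V) :
    Matrix A B ℝ :=
  M.submatrix (fun a => a.1) (fun b => b.1)

/-- Principal sub-matrix of `M` indexed by the finset `A`. -/
def psub {V : Type*} [Fintype V] [DecidableEq V] (M : Matrix V V ℝ) (A : Finset V) :
    Matrix A A ℝ :=
  msub M A A

/-- The log likelihood ratio criterion
`λ(U) = n₁ log(det M_U / det M⁽¹⁾_U) + n₂ log(det M_U / det M⁽²⁾_U)`. -/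
noncomputable def lam {V : Type*} [Fintype V] [DecidableEq V]
    (n₁ n₂ : ℝ) (M M₁ M₂ : Matrix V V ℝ) (A : Finset V) : ℝ :=
  n₁ * Real.log ((psub M A).det / (psub M₁ A).det) +
    n₂ * Real.log ((psub M A).det / (psub M₂ A).det)

/-- `K_B(N) = (N_B − N_{B,S} N_S⁻¹ N_{S,B})⁻¹`, the inverse of the Schur complement
of `N_S` in `N_{B∪S}`. -/
noncomputable def KB {V : Type*} [Fintype V] [DecidableEq V]
    (N : Matrix V V ℝ) (B S : Finset V) : Matrix B B ℝ :=
  (psub N B - msub N B S * (psub N S)⁻¹ * msub N S B)⁻¹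

/-!
Write `K = N⁻¹`. Reading the identity `N K = 1` on the columns of `B`, the vanishing of
`K_{A,B}` gives `N_{U,S} K_{S,B} + N_{U,B} K_B = 0` for every `U` disjoint from `B`; taking
`U = S` to eliminate `K_{S,B}` yields the Markov identity `N_{U,S} N_S⁻¹ N_{S,B} = N_{U,B}`.
For `U = A ∪ S` it says that `N_{A∪S}⁻¹ N_{A∪S,B}` is `N_S⁻¹ N_{S,B}` padded by zeros, so the
Schur complement of `N_{A∪S}` in `N` equals that of `N_S` in `N_{S∪B}`, i.e. `K_B(N)⁻¹`.
Expanding `det N` along the blocks `A ∪ S` and `B` then gives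
`det N = det N_{A∪S} / det K_B(N)`, and the claim follows by taking logarithms.
-/

namespace Matrix

variable {V : Type*} [Fintype V] [DecidableEq V]

noncomputable def schurCompl (N : Matrix V V ℝ) (B S : Finset V) : Matrix B B ℝ :=
  psub N B - msub N B S * (psub N S)⁻¹ * msub N S B

lemma KB_eq_inv_schurCompl (N : Matrix V V ℝ) (B S : Finset V) :
    KB N B S = (schurCompl N B S)⁻¹ :=
  rfl

lemma PosDef.posDef_psub {N : Matrix V V ℝ} (hN : N.PosDef) (U : Finset V) : (psub N U).PosDef :=
  hN.submatrix Subtype.val_injective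

lemma PosDef.isUnit_det_psub {N : Matrix V V ℝ} (hN : N.PosDef) (U : Finset V) :
    IsUnit (psub N U).det :=
  (hN.posDef_psub U).det_pos.ne'.isUnit

lemma msub_mul_msub_apply (N K : Matrix V V ℝ) (P Q R : Finset V) (p : P) (r : R) :
    (msub N P Q * msub K Q R) p r = ∑ q ∈ Q, N p q * K q r :=
  Finset.sum_coe_sort Q (fun q => N p q * K q r)

/-- `msub 1 U S` is the matrix of the inclusion `S ⊆ U`. -/
lemma msub_mul_msub_one (N : Matrix V V ℝ) (P : Finset V) {U S : Finset V} (hSU : S ⊆ U) :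
    msub N P U * msub 1 U S = msub N P S := by
  ext p s
  rw [msub_mul_msub_apply]
  simp [msub, one_apply, hSU s.2]

lemma det_psub_union (N : Matrix V V ℝ) {P Q : Finset V} (hPQ : Disjoint P Q)
    (hP : IsUnit (psub N P).det) :
    (psub N (P ∪ Q)).det = (psub N P).det * (schurCompl N Q P).det := by
  let _ : Invertible (psub N P) := invertibleOfIsUnitDet _ hP
  have hblocks : fromBlocks (psub N P) (msub N P Q) (msub N Q P) (psub N Q) =
      (psub N (P ∪ Q)).submatrix (Equiv.Finset.union P Q hPQ) (Equiv.Finset.union P Q hPQ) := by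
    ext (i | i) (j | j) <;> rfl
  rw [← det_submatrix_equiv_self (Equiv.Finset.union P Q hPQ), ← hblocks, det_fromBlocks₁₁,
    invOf_eq_nonsing_inv, schurCompl]

lemma PosDef.det_schurCompl_pos {N : Matrix V V ℝ} (hN : N.PosDef) {S B : Finset V}
    (hSB : Disjoint S B) : 0 < (schurCompl N B S).det := by
  have h := (hN.posDef_psub (S ∪ B)).det_pos
  rw [det_psub_union N hSB (hN.isUnit_det_psub S)] at h
  exact pos_of_mul_pos_right h (hN.posDef_psub S).det_pos.le

lemma msub_mul_msub_add_msub_mul_msub {N K : Matrix V V ℝ} {S B : Finset V}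
    (hSB : Disjoint S B) (hK : ∀ v ∉ S ∪ B, ∀ b ∈ B, K v b = 0) (U : Finset V) :
    msub N U S * msub K S B + msub N U B * msub K B B = msub (N * K) U B := by
  ext u b
  rw [add_apply, msub_mul_msub_apply, msub_mul_msub_apply, ← Finset.sum_union hSB]
  exact Finset.sum_subset (Finset.subset_univ _) fun v _ hv => by rw [hK v hv b b.2, mul_zero]

lemma PosDef.msub_mul_inv_mul_msub {N : Matrix V V ℝ} (hN : N.PosDef) {S B : Finset V}
    (hSB : Disjoint S B) (hz : ∀ v ∉ S ∪ B, ∀ b ∈ B, N⁻¹ v b = 0) {U : Finset V}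
    (hUB : Disjoint U B) :
    msub N U S * ((psub N S)⁻¹ * msub N S B) = msub N U B := by
  have hrow : ∀ U : Finset V, Disjoint U B →
      msub N U S * msub N⁻¹ S B + msub N U B * psub N⁻¹ B = 0 := by
    intro U hUB
    rw [psub, msub_mul_msub_add_msub_mul_msub hSB hz, mul_nonsing_inv _ hN.det_pos.ne'.isUnit]
    ext u b
    have hub : (u : V) ≠ b := fun h => Finset.disjoint_left.mp hUB u.2 (h ▸ b.2)
    exact one_apply_ne hub
  have hKSB : msub N⁻¹ S B = -((psub N S)⁻¹ * msub N S B * psub N⁻¹ B) := by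
    have hS : psub N S * msub N⁻¹ S B + msub N S B * psub N⁻¹ B = 0 := hrow S hSB
    rw [Matrix.mul_assoc, ← Matrix.mul_neg, ← eq_neg_of_add_eq_zero_left hS,
      nonsing_inv_mul_cancel_left _ _ (hN.isUnit_det_psub S)]
  have hKB := hN.inv.isUnit_det_psub B
  have hU := hrow U hUB
  rw [hKSB, Matrix.mul_neg, neg_add_eq_zero] at hU
  calc msub N U S * ((psub N S)⁻¹ * msub N S B)
      = msub N U S * ((psub N S)⁻¹ * msub N S B) * psub N⁻¹ B * (psub N⁻¹ B)⁻¹ :=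
        (mul_nonsing_inv_cancel_right _ _ hKB).symm
    _ = msub N U B * psub N⁻¹ B * (psub N⁻¹ B)⁻¹ := by rw [← hU]; simp only [Matrix.mul_assoc]
    _ = msub N U B := mul_nonsing_inv_cancel_right _ _ hKB

lemma schurCompl_eq_of_subset {N : Matrix V V ℝ} {S U B : Finset V} (hSU : S ⊆ U)
    (hU : IsUnit (psub N U).det)
    (h : msub N U S * ((psub N S)⁻¹ * msub N S B) = msub N U B) :
    schurCompl N B U = schurCompl N B S := by
  have hNU : psub N U * msub 1 U S = msub N U S := msub_mul_msub_one N U hSU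
  have hpad : (psub N U)⁻¹ * msub N U B = msub 1 U S * ((psub N S)⁻¹ * msub N S B) := by
    rw [← h, ← hNU, Matrix.mul_assoc, nonsing_inv_mul_cancel_left _ _ hU]
  rw [schurCompl, schurCompl, Matrix.mul_assoc, hpad, ← Matrix.mul_assoc (msub N B U),
    msub_mul_msub_one N B hSU, Matrix.mul_assoc (msub N B S)]

lemma PosDef.det_psub_univ_eq {N : Matrix V V ℝ} (hN : N.PosDef) {A S B : Finset V}
    (hAB : Disjoint A B) (hSB : Disjoint S B) (hcover : A ∪ S ∪ B = Finset.univ)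
    (hz : ∀ a ∈ A, ∀ b ∈ B, N⁻¹ a b = 0) :
    (psub N Finset.univ).det = (psub N (A ∪ S)).det * (schurCompl N B S).det := by
  have hz' : ∀ v ∉ S ∪ B, ∀ b ∈ B, N⁻¹ v b = 0 := fun v hv => by
    have hv' := hcover ▸ Finset.mem_univ v
    simp only [Finset.mem_union] at hv hv'
    exact hz v (by tauto)
  have hASB : Disjoint (A ∪ S) B := Finset.disjoint_union_left.2 ⟨hAB, hSB⟩
  rw [← hcover, det_psub_union N hASB (hN.isUnit_det_psub _),
    schurCompl_eq_of_subset Finset.subset_union_right (hN.isUnit_det_psub _)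
      (hN.msub_mul_inv_mul_msub hSB hz' hASB)]

lemma log_det_psub_univ_div {N N' : Matrix V V ℝ} (hN : N.PosDef) (hN' : N'.PosDef)
    {A S B : Finset V} (hAB : Disjoint A B) (hSB : Disjoint S B)
    (hcover : A ∪ S ∪ B = Finset.univ) (hz : ∀ a ∈ A, ∀ b ∈ B, N⁻¹ a b = 0)
    (hz' : ∀ a ∈ A, ∀ b ∈ B, N'⁻¹ a b = 0) :
    Real.log ((psub N Finset.univ).det / (psub N' Finset.univ).det) =
      Real.log ((psub N (A ∪ S)).det / (psub N' (A ∪ S)).det) +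
        Real.log ((KB N' B S).det / (KB N B S).det) := by
  have hd := (hN.posDef_psub (A ∪ S)).det_pos
  have hd' := (hN'.posDef_psub (A ∪ S)).det_pos
  have hc := hN.det_schurCompl_pos hSB
  have hc' := hN'.det_schurCompl_pos hSB
  rw [hN.det_psub_univ_eq hAB hSB hcover hz, hN'.det_psub_univ_eq hAB hSB hcover hz',
    KB_eq_inv_schurCompl, KB_eq_inv_schurCompl, det_nonsing_inv, det_nonsing_inv,
    Ring.inverse_eq_inv',
    ← Real.log_mul (div_pos hd hd').ne' (div_pos (inv_pos.2 hc') (inv_pos.2 hc)).ne']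
  congr 1
  field_simp

end Matrix

theorem stmt_3_general {V : Type*} [Fintype V] [DecidableEq V]
    (A S B : Finset V)
    (hAB : Disjoint A B) (hSB : Disjoint S B)
    (hcover : A ∪ S ∪ B = Finset.univ)
    (n₁ n₂ : ℝ)
    (M M₁ M₂ : Matrix V V ℝ)
    (hM : M.PosDef) (hM₁ : M₁.PosDef) (hM₂ : M₂.PosDef)
    (hzM : ∀ a ∈ A, ∀ b ∈ B, M⁻¹ a b = 0)
    (hzM₁ : ∀ a ∈ A, ∀ b ∈ B, M₁⁻¹ a b = 0)
    (hzM₂ : ∀ a ∈ A, ∀ b ∈ B, M₂⁻¹ a b = 0) :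
    lam n₁ n₂ M M₁ M₂ Finset.univ =
      lam n₁ n₂ M M₁ M₂ (A ∪ S) +
        n₁ * Real.log ((KB M₁ B S).det / (KB M B S).det) +
        n₂ * Real.log ((KB M₂ B S).det / (KB M B S).det) := by
  rw [lam, lam, log_det_psub_univ_div hM hM₁ hAB hSB hcover hzM hzM₁,
    log_det_psub_univ_div hM hM₂ hAB hSB hcover hzM hzM₂]
  ring

/-- Equation (4) in the proof of Theorem 1: for a partition `(A, S, B)` of `V` and
symmetric positive definite matrices `M, M⁽¹⁾, M⁽²⁾` whose inverses have zero `(A,B)`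
block, `λ(V) = λ(A ∪ S) + n₁ log(det K_B(M⁽¹⁾)/det K_B(M)) + n₂ log(det K_B(M⁽²⁾)/det K_B(M))`. -/
theorem stmt_3 {V : Type*} [Fintype V] [DecidableEq V]
    (A S B : Finset V) (hA : A.Nonempty) (hS : S.Nonempty) (hB : B.Nonempty)
    (hAS : Disjoint A S) (hAB : Disjoint A B) (hSB : Disjoint S B)
    (hcover : A ∪ S ∪ B = Finset.univ)
    (n₁ n₂ : ℝ) (hn₁ : 0 < n₁) (hn₂ : 0 < n₂)
    (M M₁ M₂ : Matrix V V ℝ)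
    (hMsym : M.IsSymm) (hM₁sym : M₁.IsSymm) (hM₂sym : M₂.IsSymm)
    (hM : M.PosDef) (hM₁ : M₁.PosDef) (hM₂ : M₂.PosDef)
    (hzM : ∀ a ∈ A, ∀ b ∈ B, M⁻¹ a b = 0)
    (hzM₁ : ∀ a ∈ A, ∀ b ∈ B, M₁⁻¹ a b = 0)
    (hzM₂ : ∀ a ∈ A, ∀ b ∈ B, M₂⁻¹ a b = 0) :
    lam n₁ n₂ M M₁ M₂ Finset.univ =
      lam n₁ n₂ M M₁ M₂ (A ∪ S) +
        n₁ * Real.log ((KB M₁ B S).det / (KB M B S).det) +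
        n₂ * Real.log ((KB M₂ B S).det / (KB M B S).det) :=
  stmt_3_general A S B hAB hSB hcover n₁ n₂ M M₁ M₂ hM hM₁ hM₂ hzM hzM₁ hzM₂
end

section
/- Let V be a finite index set, let (μ⁽¹⁾, Σ⁽¹⁾) and (μ⁽²⁾, Σ⁽²⁾) be two pairs of mean vectors and symmetric positive definite covariance matrices indexed by V, and let D ⊆ V be a nonempty proper subset that is a seed set for the two pairs. Then for every x ∈ ℝ^V, f(x; μ⁽¹⁾, Σ⁽¹⁾) / f(x; μ⁽²⁾, Σ⁽²⁾) = f(x_D; μ⁽¹⁾_D, Σ⁽¹⁾_D) / f(x_D; μ⁽²⁾_D, Σ⁽²⁾_D). That is, the likelihood ratio of the two joint Gaussian densities depends on x only through x_D and equals the likelihood ratio of the marginal densities on D. -/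
/-! Permuting `V` so that `D` comes first, the Schur complement of `Σ_D` gives the factorization
`Σ = L · diag(Σ_D, Σ_{V∖D|D}) · Lᵀ` with `L` block unitriangular. It splits `det Σ` and the
quadratic form of `Σ⁻¹`, so the joint density is the marginal density of `x_D` times the Gaussian
density of `x_{V∖D}` with the conditional parameters. For a seed set the second factors of the two
densities coincide and cancel in the ratio. -/

open Matrix

/-- Sub-vector of `x` indexed by the finset `A`. -/
def rest {V : Type*} (x : V → ℝ) (A : Finset V) : A → ℝ := fun a => x a.1

/-- The conditional parameters of `X_B` given `X_S` for a Gaussian vector with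
parameters `(μ, Σ)`: the triple
`(μ_B − Σ_{B,S} Σ_S⁻¹ μ_S, Σ_{B,S} Σ_S⁻¹, Σ_B − Σ_{B,S} Σ_S⁻¹ Σ_{S,B})`. -/
noncomputable def condParams {V : Type*} [Fintype V] [DecidableEq V]
    (μ : V → ℝ) (Sg : Matrix V V ℝ) (B S : Finset V) :
    (B → ℝ) × Matrix B S ℝ × Matrix B B ℝ :=
  (rest μ B - (msub Sg B S * (psub Sg S)⁻¹) *ᵥ rest μ S,
   msub Sg B S * (psub Sg S)⁻¹,
   psub Sg B - msub Sg B S * (psub Sg S)⁻¹ * msub Sg S B)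

/-- `D` is a seed set for the pairs `(μ⁽¹⁾, Σ⁽¹⁾)`, `(μ⁽²⁾, Σ⁽²⁾)` if the conditional
parameters of `X_{V∖D}` given `X_D` coincide for the two pairs.  (For `D = V` the
condition is vacuous, and for `D = ∅` it amounts to equality of the two pairs.) -/
def IsSeedSet {V : Type*} [Fintype V] [DecidableEq V]
    (μ₁ : V → ℝ) (S₁ : Matrix V V ℝ) (μ₂ : V → ℝ) (S₂ : Matrix V V ℝ)
    (D : Finset V) : Prop :=
  condParams μ₁ S₁ Dᶜ D = condParams μ₂ S₂ Dᶜ D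

/-- The Gaussian density. -/
noncomputable def gauss {I : Type*} [Fintype I] [DecidableEq I]
    (μ : I → ℝ) (S : Matrix I I ℝ) (x : I → ℝ) : ℝ :=
  (2 * Real.pi) ^ (-(Fintype.card I : ℝ) / 2) * S.det ^ (-(1 : ℝ) / 2) *
    Real.exp (-(1 / 2 : ℝ) * ((x - μ) ⬝ᵥ (S⁻¹ *ᵥ (x - μ))))

section BlockQuadForm

variable {R ι m n : Type*} [CommRing R] [Fintype ι] [DecidableEq ι]
  [Fintype m] [DecidableEq m] [Fintype n] [DecidableEq n]

theorem dotProduct_inv_mulVec_of_eq_mul_mul_transpose {M N P : Matrix ι ι R}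
    (hM : M = P * N * Pᵀ) (hP : IsUnit P.det) (z : ι → R) :
    (P *ᵥ z) ⬝ᵥ (M⁻¹ *ᵥ (P *ᵥ z)) = z ⬝ᵥ (N⁻¹ *ᵥ z) := by
  have hPt : IsUnit Pᵀ.det := by rwa [det_transpose]
  have hMP : M⁻¹ * P = Pᵀ⁻¹ * N⁻¹ := by
    rw [hM, Matrix.mul_inv_rev, Matrix.mul_inv_rev, Matrix.mul_assoc, Matrix.mul_assoc,
      nonsing_inv_mul _ hP, Matrix.mul_one]
  rw [mulVec_mulVec, hMP, ← mulVec_mulVec, dotProduct_mulVec, ← vecMul_transpose, vecMul_vecMul,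
    mul_nonsing_inv _ hPt, vecMul_one]

theorem sumElim_dotProduct_inv_fromBlocks_mulVec {A : Matrix m m R} {B : Matrix m n R}
    {C : Matrix n m R} {D : Matrix n n R} (hM : (fromBlocks A B C D).IsSymm)
    (hA : IsUnit A.det) (hS : IsUnit (D - C * A⁻¹ * B).det) (u : m → R) (v : n → R) :
    (u ⊕ᵥ v) ⬝ᵥ ((fromBlocks A B C D)⁻¹ *ᵥ (u ⊕ᵥ v)) =
      u ⬝ᵥ (A⁻¹ *ᵥ u) +
        (v - (C * A⁻¹) *ᵥ u) ⬝ᵥ ((D - C * A⁻¹ * B)⁻¹ *ᵥ (v - (C * A⁻¹) *ᵥ u)) := by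
  obtain ⟨hAs, -, hCB, -⟩ := isSymm_fromBlocks_iff.mp hM
  let _ := invertibleOfIsUnitDet A hA
  set L : Matrix (m ⊕ n) (m ⊕ n) R := fromBlocks 1 0 (C * A⁻¹) 1
  have hLDU : fromBlocks A B C D = L * fromBlocks A 0 0 (D - C * A⁻¹ * B) * Lᵀ := by
    rw [fromBlocks_eq_of_invertible₁₁, invOf_eq_nonsing_inv, fromBlocks_transpose,
      transpose_mul, transpose_nonsing_inv, hAs.eq, hCB]
    simp [L]
  have hL : IsUnit L.det := by simp [L]
  have huv : u ⊕ᵥ v = L *ᵥ (u ⊕ᵥ (v - (C * A⁻¹) *ᵥ u)) := by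
    simp [L, fromBlocks_mulVec]
  rw [huv, dotProduct_inv_mulVec_of_eq_mul_mul_transpose hLDU hL,
    inv_fromBlocks_zero₂₁_of_isUnit_iff _ _ _ <|
      iff_of_true ((isUnit_iff_isUnit_det A).mpr hA) ((isUnit_iff_isUnit_det _).mpr hS),
    fromBlocks_mulVec, sumElim_dotProduct_sumElim]
  simp

end BlockQuadForm

section GaussFactorization

variable {V : Type*} [Fintype V] [DecidableEq V]

def finsetSumComplEquiv (D : Finset V) : D ⊕ (Dᶜ : Finset V) ≃ V :=
  (Equiv.sumCongr (Equiv.refl D) (Equiv.subtypeEquivRight fun _ => Finset.mem_compl)).trans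
    (Equiv.sumCompl (· ∈ D))

theorem submatrix_finsetSumComplEquiv (M : Matrix V V ℝ) (D : Finset V) :
    M.submatrix (finsetSumComplEquiv D) (finsetSumComplEquiv D) =
      fromBlocks (psub M D) (msub M D Dᶜ) (msub M Dᶜ D) (psub M Dᶜ) := by
  ext (i | i) (j | j) <;> rfl

theorem comp_finsetSumComplEquiv (x : V → ℝ) (D : Finset V) :
    x ∘ finsetSumComplEquiv D = rest x D ⊕ᵥ rest x Dᶜ := by
  ext (i | i) <;> rfl

theorem psub_posDef {M : Matrix V V ℝ} (hM : M.PosDef) (D : Finset V) : (psub M D).PosDef :=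
  hM.submatrix Subtype.val_injective

theorem det_eq_det_psub_mul_det_condParams (μ : V → ℝ) {M : Matrix V V ℝ} {D : Finset V}
    (hD : IsUnit (psub M D).det) :
    M.det = (psub M D).det * (condParams μ M Dᶜ D).2.2.det := by
  let _ := invertibleOfIsUnitDet _ hD
  rw [← det_submatrix_equiv_self (finsetSumComplEquiv D), submatrix_finsetSumComplEquiv,
    det_fromBlocks₁₁, invOf_eq_nonsing_inv, condParams]

theorem det_condParams_pos (μ : V → ℝ) {M : Matrix V V ℝ} (hM : M.PosDef) (D : Finset V) :
    0 < (condParams μ M Dᶜ D).2.2.det := by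
  have hD := (psub_posDef hM D).det_pos
  have h := hM.det_pos
  rw [det_eq_det_psub_mul_det_condParams μ hD.ne'.isUnit] at h
  exact pos_of_mul_pos_right h hD.le

theorem dotProduct_inv_mulVec_eq_add_condParams (μ : V → ℝ) {M : Matrix V V ℝ} (hM : M.PosDef)
    (D : Finset V) (x : V → ℝ) :
    (x - μ) ⬝ᵥ (M⁻¹ *ᵥ (x - μ)) =
      (rest x D - rest μ D) ⬝ᵥ ((psub M D)⁻¹ *ᵥ (rest x D - rest μ D)) +
        (rest x Dᶜ - ((condParams μ M Dᶜ D).1 + (condParams μ M Dᶜ D).2.1 *ᵥ rest x D)) ⬝ᵥ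
          ((condParams μ M Dᶜ D).2.2⁻¹ *ᵥ
            (rest x Dᶜ - ((condParams μ M Dᶜ D).1 + (condParams μ M Dᶜ D).2.1 *ᵥ rest x D))) := by
  have hsymm : (fromBlocks (psub M D) (msub M D Dᶜ) (msub M Dᶜ D) (psub M Dᶜ)).IsSymm := by
    rw [← submatrix_finsetSumComplEquiv]
    exact (isHermitian_iff_isSymm.mp hM.isHermitian).submatrix _
  have hmean : rest x Dᶜ - ((condParams μ M Dᶜ D).1 + (condParams μ M Dᶜ D).2.1 *ᵥ rest x D) =
      rest x Dᶜ - rest μ Dᶜ - (msub M Dᶜ D * (psub M D)⁻¹) *ᵥ (rest x D - rest μ D) := by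
    simp only [condParams, mulVec_sub]
    abel
  have hreindex : (x - μ) ⬝ᵥ (M⁻¹ *ᵥ (x - μ)) =
      ((x - μ) ∘ finsetSumComplEquiv D) ⬝ᵥ
        (M⁻¹.submatrix (finsetSumComplEquiv D) (finsetSumComplEquiv D) *ᵥ
          ((x - μ) ∘ finsetSumComplEquiv D)) := by
    rw [submatrix_mulVec_equiv, Function.comp_assoc, Equiv.self_comp_symm, Function.comp_id,
      comp_equiv_dotProduct_comp_equiv]
  rw [hmean, hreindex, ← inv_submatrix_equiv, submatrix_finsetSumComplEquiv,
    comp_finsetSumComplEquiv]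
  exact sumElim_dotProduct_inv_fromBlocks_mulVec hsymm (psub_posDef hM D).det_pos.ne'.isUnit
    (det_condParams_pos μ hM D).ne'.isUnit _ _

theorem gauss_eq_gauss_psub_mul_gauss_condParams (μ : V → ℝ) {M : Matrix V V ℝ}
    (hM : M.PosDef) (D : Finset V) (x : V → ℝ) :
    gauss μ M x = gauss (rest μ D) (psub M D) (rest x D) *
      gauss ((condParams μ M Dᶜ D).1 + (condParams μ M Dᶜ D).2.1 *ᵥ rest x D)
        (condParams μ M Dᶜ D).2.2 (rest x Dᶜ) := by
  have hcard : (Fintype.card V : ℝ) = Fintype.card D + Fintype.card (Dᶜ : Finset V) := by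
    simp only [Fintype.card_coe]
    exact_mod_cast D.card_add_card_compl.symm
  unfold gauss
  rw [dotProduct_inv_mulVec_eq_add_condParams μ hM D x,
    det_eq_det_psub_mul_det_condParams μ (psub_posDef hM D).det_pos.ne'.isUnit, hcard,
    Real.mul_rpow (psub_posDef hM D).det_pos.le (det_condParams_pos μ hM D).le,
    neg_add, add_div, Real.rpow_add (by positivity), mul_add, Real.exp_add]
  ring

theorem gauss_pos {I : Type*} [Fintype I] [DecidableEq I] (μ : I → ℝ) {S : Matrix I I ℝ}
    (hS : 0 < S.det) (x : I → ℝ) : 0 < gauss μ S x := by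
  unfold gauss
  positivity

end GaussFactorization

theorem stmt_8_general {V : Type*} [Fintype V] [DecidableEq V]
    (μ₁ μ₂ : V → ℝ) (S₁ S₂ : Matrix V V ℝ)
    (h₁ : S₁.PosDef) (h₂ : S₂.PosDef)
    (D : Finset V)
    (hseed : IsSeedSet μ₁ S₁ μ₂ S₂ D) :
    ∀ x : V → ℝ,
      gauss μ₁ S₁ x / gauss μ₂ S₂ x =
        gauss (rest μ₁ D) (psub S₁ D) (rest x D) /
          gauss (rest μ₂ D) (psub S₂ D) (rest x D) := by
  intro x
  unfold IsSeedSet at hseed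
  rw [gauss_eq_gauss_psub_mul_gauss_condParams μ₁ h₁ D x,
    gauss_eq_gauss_psub_mul_gauss_condParams μ₂ h₂ D x, hseed]
  exact mul_div_mul_right _ _ (gauss_pos _ (det_condParams_pos μ₂ h₂ D) _).ne'

/-- If `D` is a nonempty proper seed set, the likelihood ratio of the two joint Gaussian
densities depends on `x` only through `x_D` and equals the likelihood ratio of the
marginal Gaussian densities on `D`. -/
theorem stmt_8 {V : Type*} [Fintype V] [DecidableEq V]
    (μ₁ μ₂ : V → ℝ) (S₁ S₂ : Matrix V V ℝ)
    (h₁sym : S₁.IsSymm) (h₂sym : S₂.IsSymm)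
    (h₁ : S₁.PosDef) (h₂ : S₂.PosDef)
    (D : Finset V) (hne : D.Nonempty) (hproper : D ≠ Finset.univ)
    (hseed : IsSeedSet μ₁ S₁ μ₂ S₂ D) :
    ∀ x : V → ℝ,
      gauss μ₁ S₁ x / gauss μ₂ S₂ x =
        gauss (rest μ₁ D) (psub S₁ D) (rest x D) /
          gauss (rest μ₂ D) (psub S₂ D) (rest x D) :=
  stmt_8_general μ₁ μ₂ S₁ S₂ h₁ h₂ D hseed
end

section
/- Let V be a finite index set and let (μ⁽¹⁾, Σ⁽¹⁾), (μ⁽²⁾, Σ⁽²⁾) be two pairs of mean vectors and symmetric positive definite covariance matrices indexed by V. If D₁ ⊆ V and D₂ ⊆ V are both seed sets for the two pairs, then D₁ ∩ D₂ is also a seed set for the two pairs. -/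
open Matrix

/-!
Write `K = Σ⁻¹` and `B = V ∖ D`. The `(B, D)` and `(B, B)` blocks of `K Σ = 1` give
`K_B Σ_{B,D} Σ_D⁻¹ = -K_{B,D}` and `K_B (Σ_B - Σ_{B,D} Σ_D⁻¹ Σ_{D,B}) = 1`, hence also
`K_B (μ_B - Σ_{B,D} Σ_D⁻¹ μ_D) = (K μ)_B`. So the conditional parameters given `X_D` and the rows
of `K` and `K μ` indexed by `B` determine each other, and `D` is a seed set exactly when the two
pairs have the same rows of `Σ⁻¹` and `Σ⁻¹ μ` outside `D`. Since
`(D₁ ∩ D₂)ᶜ = D₁ᶜ ∪ D₂ᶜ`, this condition passes to intersections.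
-/

section

variable {V : Type*} [Fintype V] [DecidableEq V]

lemma msub_mul (M N : Matrix V V ℝ) (A C S : Finset V) :
    msub (M * N) A C = msub M A S * msub N S C + msub M A Sᶜ * msub N Sᶜ C := by
  ext i j
  simp only [msub, submatrix_apply, Matrix.add_apply, mul_apply]
  rw [Finset.sum_coe_sort S (fun k => M i.1 k * N k j.1),
    Finset.sum_coe_sort Sᶜ (fun k => M i.1 k * N k j.1), Finset.sum_add_sum_compl S]

lemma rest_mulVec (M : Matrix V V ℝ) (x : V → ℝ) (A S : Finset V) :
    rest (M *ᵥ x) A = msub M A S *ᵥ rest x S + msub M A Sᶜ *ᵥ rest x Sᶜ := by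
  funext i
  simp only [rest, msub, submatrix_apply, Pi.add_apply, mulVec, dotProduct]
  rw [Finset.sum_coe_sort S (fun k => M i.1 k * x k),
    Finset.sum_coe_sort Sᶜ (fun k => M i.1 k * x k), Finset.sum_add_sum_compl S]

lemma psub_one (A : Finset V) : psub (1 : Matrix V V ℝ) A = 1 := by
  ext i j
  simp only [psub, msub, submatrix_apply, one_apply, Subtype.coe_inj]

lemma msub_one_compl (A : Finset V) : msub (1 : Matrix V V ℝ) Aᶜ A = 0 := by
  ext i j
  have hij : (i : V) ≠ j := fun h => Finset.mem_compl.mp i.2 (h ▸ j.2)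
  simp [msub, one_apply, hij]

lemma isUnit_det_psub_of_posDef {M : Matrix V V ℝ} (hM : M.PosDef) (A : Finset V) :
    IsUnit (psub M A).det :=
  isUnit_iff_isUnit_det _ |>.mp (hM.submatrix Subtype.val_injective).isUnit

section BlockInverse

variable {S : Matrix V V ℝ} {D : Finset V}

lemma psub_inv_mul_regression (hS : IsUnit S.det) (hSD : IsUnit (psub S D).det) :
    psub S⁻¹ Dᶜ * (msub S Dᶜ D * (psub S D)⁻¹) = -msub S⁻¹ Dᶜ D := by
  have hblock : msub S⁻¹ Dᶜ D * psub S D + psub S⁻¹ Dᶜ * msub S Dᶜ D = 0 := by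
    rw [← msub_one_compl D, ← nonsing_inv_mul S hS]
    exact (msub_mul _ _ _ _ D).symm
  rw [← Matrix.mul_assoc, eq_neg_of_add_eq_zero_right hblock, Matrix.neg_mul, Matrix.mul_assoc,
    mul_nonsing_inv _ hSD, Matrix.mul_one]

lemma psub_inv_mul_schur (hS : IsUnit S.det) (hSD : IsUnit (psub S D).det) :
    psub S⁻¹ Dᶜ * (psub S Dᶜ - msub S Dᶜ D * (psub S D)⁻¹ * msub S D Dᶜ) = 1 := by
  have hblock : msub S⁻¹ Dᶜ D * msub S D Dᶜ + psub S⁻¹ Dᶜ * psub S Dᶜ = 1 := by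
    rw [← psub_one Dᶜ, ← nonsing_inv_mul S hS]
    exact (msub_mul _ _ _ _ D).symm
  rw [Matrix.mul_sub, ← Matrix.mul_assoc, ← Matrix.mul_assoc, Matrix.mul_assoc (psub S⁻¹ Dᶜ),
    psub_inv_mul_regression hS hSD, Matrix.neg_mul, sub_neg_eq_add, add_comm, hblock]

lemma psub_inv_mulVec_condMean (hS : IsUnit S.det) (hSD : IsUnit (psub S D).det) (μ : V → ℝ) :
    psub S⁻¹ Dᶜ *ᵥ (rest μ Dᶜ - (msub S Dᶜ D * (psub S D)⁻¹) *ᵥ rest μ D) =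
      rest (S⁻¹ *ᵥ μ) Dᶜ := by
  rw [mulVec_sub, mulVec_mulVec, psub_inv_mul_regression hS hSD, rest_mulVec S⁻¹ μ Dᶜ D,
    neg_mulVec, sub_neg_eq_add, add_comm]
  rfl

lemma isUnit_det_psub_inv_compl (hS : IsUnit S.det) (hSD : IsUnit (psub S D).det) :
    IsUnit (psub S⁻¹ Dᶜ).det :=
  isUnit_det_of_right_inverse (psub_inv_mul_schur hS hSD)

lemma condParams_compl_eq (hS : IsUnit S.det) (hSD : IsUnit (psub S D).det) (μ : V → ℝ) :
    condParams μ S Dᶜ D =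
      ((psub S⁻¹ Dᶜ)⁻¹ *ᵥ rest (S⁻¹ *ᵥ μ) Dᶜ, -((psub S⁻¹ Dᶜ)⁻¹ * msub S⁻¹ Dᶜ D),
        (psub S⁻¹ Dᶜ)⁻¹) := by
  have hK := isUnit_det_psub_inv_compl hS hSD
  refine Prod.ext ?_ (Prod.ext ?_ ?_)
  · rw [← psub_inv_mulVec_condMean hS hSD μ, mulVec_mulVec, nonsing_inv_mul _ hK, one_mulVec]
    rfl
  · rw [← Matrix.mul_neg, ← psub_inv_mul_regression hS hSD, nonsing_inv_mul_cancel_left _ _ hK]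
    rfl
  · exact (inv_eq_right_inv (psub_inv_mul_schur hS hSD)).symm

end BlockInverse

lemma inv_mulVec_neg_inv_mul_inv_eq_iff {m n : Type*} [Fintype m] [DecidableEq m]
    {P₁ P₂ : Matrix m m ℝ} (hP₁ : IsUnit P₁.det) (X₁ X₂ : Matrix m n ℝ) (x₁ x₂ : m → ℝ) :
    (P₁⁻¹ *ᵥ x₁, -(P₁⁻¹ * X₁), P₁⁻¹) = (P₂⁻¹ *ᵥ x₂, -(P₂⁻¹ * X₂), P₂⁻¹) ↔
      P₁ = P₂ ∧ X₁ = X₂ ∧ x₁ = x₂ := by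
  refine ⟨fun h => ?_, by rintro ⟨rfl, rfl, rfl⟩; rfl⟩
  simp only [Prod.mk.injEq, neg_inj] at h
  obtain ⟨hx, hX, hP⟩ := h
  obtain rfl := inv_inj hP hP₁
  refine ⟨rfl, ?_, ?_⟩
  · rw [← mul_nonsing_inv_cancel_left _ X₁ hP₁, hX, mul_nonsing_inv_cancel_left _ X₂ hP₁]
  · rw [← one_mulVec x₁, ← mul_nonsing_inv _ hP₁, ← mulVec_mulVec, hx, mulVec_mulVec,
      mul_nonsing_inv _ hP₁, one_mulVec]

lemma psub_msub_rest_compl_eq_iff (K₁ K₂ : Matrix V V ℝ) (x₁ x₂ : V → ℝ) (D : Finset V) :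
    (psub K₁ Dᶜ = psub K₂ Dᶜ ∧ msub K₁ Dᶜ D = msub K₂ Dᶜ D ∧ rest x₁ Dᶜ = rest x₂ Dᶜ) ↔
      ∀ i ∉ D, K₁ i = K₂ i ∧ x₁ i = x₂ i := by
  constructor
  · rintro ⟨hP, hX, hx⟩ i hi
    have hi' : i ∈ Dᶜ := Finset.mem_compl.mpr hi
    refine ⟨funext fun j => ?_, congrFun hx ⟨i, hi'⟩⟩
    by_cases hj : j ∈ D
    · exact congrFun₂ hX ⟨i, hi'⟩ ⟨j, hj⟩
    · exact congrFun₂ hP ⟨i, hi'⟩ ⟨j, Finset.mem_compl.mpr hj⟩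
  · intro h
    have hrow (i : (Dᶜ : Finset V)) := h i (Finset.mem_compl.mp i.2)
    exact ⟨ext fun i j => congrFun (hrow i).1 j, ext fun i j => congrFun (hrow i).1 j,
      funext fun i => (hrow i).2⟩

lemma isSeedSet_iff {μ₁ μ₂ : V → ℝ} {S₁ S₂ : Matrix V V ℝ} {D : Finset V}
    (hS₁ : IsUnit S₁.det) (hS₁D : IsUnit (psub S₁ D).det)
    (hS₂ : IsUnit S₂.det) (hS₂D : IsUnit (psub S₂ D).det) :
    IsSeedSet μ₁ S₁ μ₂ S₂ D ↔
      ∀ i ∉ D, S₁⁻¹ i = S₂⁻¹ i ∧ (S₁⁻¹ *ᵥ μ₁) i = (S₂⁻¹ *ᵥ μ₂) i := by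
  rw [IsSeedSet, condParams_compl_eq hS₁ hS₁D, condParams_compl_eq hS₂ hS₂D,
    inv_mulVec_neg_inv_mul_inv_eq_iff (isUnit_det_psub_inv_compl hS₁ hS₁D),
    psub_msub_rest_compl_eq_iff]

end

theorem stmt_10_general {V : Type*} [Fintype V] [DecidableEq V]
    (μ₁ μ₂ : V → ℝ) (S₁ S₂ : Matrix V V ℝ)
    (h₁ : S₁.PosDef) (h₂ : S₂.PosDef)
    (D₁ D₂ : Finset V)
    (hseed₁ : IsSeedSet μ₁ S₁ μ₂ S₂ D₁) (hseed₂ : IsSeedSet μ₁ S₁ μ₂ S₂ D₂) :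
    IsSeedSet μ₁ S₁ μ₂ S₂ (D₁ ∩ D₂) := by
  have hseed (D : Finset V) := isSeedSet_iff (μ₁ := μ₁) (μ₂ := μ₂)
    (isUnit_iff_isUnit_det _ |>.mp h₁.isUnit) (isUnit_det_psub_of_posDef h₁ D)
    (isUnit_iff_isUnit_det _ |>.mp h₂.isUnit) (isUnit_det_psub_of_posDef h₂ D)
  rw [hseed] at hseed₁ hseed₂ ⊢
  intro i hi
  rw [Finset.mem_inter, not_and_or] at hi
  exact hi.elim (hseed₁ i) (hseed₂ i)

/-- The intersection of two seed sets is a seed set. -/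
theorem stmt_10 {V : Type*} [Fintype V] [DecidableEq V]
    (μ₁ μ₂ : V → ℝ) (S₁ S₂ : Matrix V V ℝ)
    (h₁sym : S₁.IsSymm) (h₂sym : S₂.IsSymm)
    (h₁ : S₁.PosDef) (h₂ : S₂.PosDef)
    (D₁ D₂ : Finset V)
    (hseed₁ : IsSeedSet μ₁ S₁ μ₂ S₂ D₁) (hseed₂ : IsSeedSet μ₁ S₁ μ₂ S₂ D₂) :
    IsSeedSet μ₁ S₁ μ₂ S₂ (D₁ ∩ D₂) :=
  stmt_10_general μ₁ μ₂ S₁ S₂ h₁ h₂ D₁ D₂ hseed₁ hseed₂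
end

section
/- (Global Markov property for Gaussian graphical models, covariance form.) Let G be a simple graph on a finite vertex set V, let K ∈ S⁺(G) and let Σ := K⁻¹. Let A, B, S ⊆ V be pairwise disjoint subsets with A, B nonempty such that S separates A from B in G. Then Σ_{A,B} = Σ_{A,S} Σ_S⁻¹ Σ_{S,B}, with the convention that the right-hand side is the zero matrix when S = ∅. Equivalently, the conditional cross-covariance of the A-coordinates and B-coordinates given the S-coordinates vanishes. -/
open Matrix

/-- `K ∈ S⁺(G)`: `K` is symmetric positive definite with `K v w = 0` for all distinct
vertices `v, w` that are not adjacent in `G`. -/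
def SPlus {V : Type*} [Fintype V] (G : SimpleGraph V) (K : Matrix V V ℝ) : Prop :=
  K.IsSymm ∧ K.PosDef ∧ ∀ v w : V, v ≠ w → ¬ G.Adj v w → K v w = 0

/-- `S` separates `A` from `B` in `G`: every walk from a vertex of `A∖S` to a vertex of
`B∖S` passes through a vertex of `S`. -/
def Separates {V : Type*} (G : SimpleGraph V) (A B S : Finset V) : Prop :=
  ∀ a b : V, a ∈ A → a ∉ S → b ∈ B → b ∉ S →
    ∀ w : G.Walk a b, ∃ s ∈ S, s ∈ w.support

/-!
Let `I` be the set of vertices reachable from `A` by walks avoiding `S`. Every neighbour of `I`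
lies in `I ∪ S`, so for any `C` disjoint from `I` the `(I, C)` block of `K Σ = 1` reads
`K_{I,I} Σ_{I,C} + K_{I,S} Σ_{S,C} = 0`. Taking `C = S` and `C = B` and eliminating `K_{I,S}`
gives `K_{I,I} (Σ_{I,B} - Σ_{I,S} Σ_S⁻¹ Σ_{S,B}) = 0`, and `K_{I,I}` is invertible because it is
positive definite. Restricting rows to `A ⊆ I` gives the claim.
-/

section Matrix

variable {V : Type*} [Fintype V] [DecidableEq V]

@[simp]
lemma msub_apply (M : Matrix V V ℝ) (A B : Finset V) (a : A) (b : B) : msub M A B a b = M a b :=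
  rfl

lemma Matrix.PosDef.psub {M : Matrix V V ℝ} (hM : M.PosDef) (S : Finset V) : (psub M S).PosDef :=
  hM.submatrix Subtype.val_injective

lemma msub_mul_add_msub_mul_eq_zero {K Sg : Matrix V V ℝ} (hKSg : K * Sg = 1)
    {I S C : Finset V} (hIS : Disjoint I S) (hIC : Disjoint I C)
    (hK : ∀ i ∈ I, ∀ v ∉ I, v ∉ S → K i v = 0) :
    msub K I I * msub Sg I C + msub K I S * msub Sg S C = 0 := by
  ext ⟨i, hi⟩ ⟨c, hc⟩
  have hone : (K * Sg) i c = 0 := by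
    rw [hKSg, one_apply_ne fun h => Finset.disjoint_left.mp hIC hi (by rwa [h])]
  have hsupp : ∀ v ∉ I ∪ S, K i v * Sg v c = 0 := fun v hv => by
    rw [Finset.mem_union, not_or] at hv
    rw [hK i hi v hv.1 hv.2, zero_mul]
  rw [mul_apply, ← Finset.sum_subset (Finset.subset_univ _) fun v _ hv => hsupp v hv,
    Finset.sum_union hIS] at hone
  simp only [Matrix.add_apply, mul_apply, msub_apply, Matrix.zero_apply]
  rwa [Finset.sum_coe_sort I fun v => K i v * Sg v c, Finset.sum_coe_sort S fun v => K i v * Sg v c]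

lemma msub_eq_mul_inv_mul {K Sg : Matrix V V ℝ} (hKSg : K * Sg = 1)
    {I S C : Finset V} (hIS : Disjoint I S) (hIC : Disjoint I C)
    (hK : ∀ i ∈ I, ∀ v ∉ I, v ∉ S → K i v = 0)
    (hKI : IsUnit (msub K I I)) (hSgS : IsUnit (psub Sg S)) :
    msub Sg I C = msub Sg I S * (psub Sg S)⁻¹ * msub Sg S C := by
  have hC := msub_mul_add_msub_mul_eq_zero hKSg hIS hIC hK
  have hS := msub_mul_add_msub_mul_eq_zero hKSg hIS hIS hK
  have hSinv : psub Sg S * (psub Sg S)⁻¹ = 1 :=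
    mul_nonsing_inv _ ((isUnit_iff_isUnit_det _).mp hSgS)
  have hcancel (X : Matrix I C ℝ) : (msub K I I)⁻¹ * (msub K I I * X) = X :=
    nonsing_inv_mul_cancel_left _ X ((isUnit_iff_isUnit_det _).mp hKI)
  have hmul : msub K I I * msub Sg I C =
      msub K I I * (msub Sg I S * (psub Sg S)⁻¹ * msub Sg S C) :=
    calc msub K I I * msub Sg I C = -(msub K I S * msub Sg S C) := eq_neg_of_add_eq_zero_left hC
      _ = -(msub K I S * (psub Sg S * (psub Sg S)⁻¹) * msub Sg S C) := by
          rw [hSinv, Matrix.mul_one]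
      _ = msub K I I * msub Sg I S * (psub Sg S)⁻¹ * msub Sg S C := by
          rw [eq_neg_of_add_eq_zero_left hS, psub]
          simp only [Matrix.mul_assoc, Matrix.neg_mul]
      _ = msub K I I * (msub Sg I S * (psub Sg S)⁻¹ * msub Sg S C) := by
          simp only [Matrix.mul_assoc]
  rw [← hcancel (msub Sg I C), hmul, hcancel]

lemma msub_eq_mul_of_subset {M : Matrix V V ℝ} {A I B S : Finset V} (hAI : A ⊆ I)
    {X : Matrix S S ℝ} (h : msub M I B = msub M I S * X * msub M S B) :
    msub M A B = msub M A S * X * msub M S B := by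
  ext a b
  simpa only [mul_apply, msub_apply] using congrFun (congrFun h ⟨a, hAI a.2⟩) b

end Matrix

section Graph

variable {V : Type*} {G : SimpleGraph V}

lemma Separates.exists_superset_closed [Fintype V] {A B S : Finset V}
    (hsep : Separates G A B S) (hAS : Disjoint A S) :
    ∃ I : Finset V, A ⊆ I ∧ Disjoint I S ∧ Disjoint I B ∧
      ∀ i ∈ I, ∀ v ∉ I, v ∉ S → ¬ G.Adj i v := by
  classical
  let reach : V → Prop := fun v => ∃ a ∈ A, ∃ w : G.Walk a v, ∀ x ∈ w.support, x ∉ S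
  have reach_notMem : ∀ v, reach v → v ∉ S := fun v ⟨_, _, w, hw⟩ => hw v w.end_mem_support
  refine ⟨Finset.univ.filter reach, fun a ha => ?_, ?_, ?_, ?_⟩
  · have haS : a ∉ S := Finset.disjoint_left.mp hAS ha
    simpa using ⟨a, ha, SimpleGraph.Walk.nil, by simpa using haS⟩
  · exact Finset.disjoint_left.mpr fun v hv => reach_notMem v (Finset.mem_filter.mp hv).2
  · refine Finset.disjoint_left.mpr fun b hb hbB => ?_
    obtain ⟨a, ha, w, hw⟩ := (Finset.mem_filter.mp hb).2
    obtain ⟨s, hs, hsw⟩ := hsep a b ha (hw a w.start_mem_support) hbB (hw b w.end_mem_support) w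
    exact hw s hsw hs
  · intro i hi v hv hvS hadj
    obtain ⟨a, ha, w, hw⟩ := (Finset.mem_filter.mp hi).2
    refine hv (Finset.mem_filter.mpr ⟨Finset.mem_univ v, a, ha, w.concat hadj, fun x hx => ?_⟩)
    rw [SimpleGraph.Walk.support_concat, List.mem_append, List.mem_singleton] at hx
    rcases hx with hx | rfl
    exacts [hw x hx, hvS]

end Graph

theorem stmt_12_general {V : Type*} [Fintype V] [DecidableEq V]
    (G : SimpleGraph V) (K : Matrix V V ℝ) (hK : SPlus G K)
    (Sg : Matrix V V ℝ) (hSg : Sg = K⁻¹)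
    (A B S : Finset V)
    (hAS : Disjoint A S)
    (hsep : Separates G A B S) :
    msub Sg A B = msub Sg A S * (psub Sg S)⁻¹ * msub Sg S B := by
  subst hSg
  obtain ⟨-, hKpd, hKG⟩ := hK
  obtain ⟨I, hAI, hIS, hIB, hIclosed⟩ := hsep.exists_superset_closed hAS
  have hKI : ∀ i ∈ I, ∀ v ∉ I, v ∉ S → K i v = 0 := fun i hi v hv hvS =>
    hKG i v (fun h => hv (h ▸ hi)) (hIclosed i hi v hv hvS)
  have hKinv : K * K⁻¹ = 1 := mul_nonsing_inv K ((isUnit_iff_isUnit_det K).mp hKpd.isUnit)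
  exact msub_eq_mul_of_subset hAI <|
    msub_eq_mul_inv_mul hKinv hIS hIB hKI (hKpd.psub I).isUnit (hKpd.inv.psub S).isUnit

/-- Global Markov property for Gaussian graphical models, covariance form: if `K ∈ S⁺(G)`,
`Σ = K⁻¹`, and `S` separates the disjoint nonempty sets `A`, `B` in `G`, then
`Σ_{A,B} = Σ_{A,S} Σ_S⁻¹ Σ_{S,B}` (the right-hand side being the zero matrix when
`S = ∅`, which is automatic since then the sum is over the empty index type). -/
theorem stmt_12 {V : Type*} [Fintype V] [DecidableEq V]
    (G : SimpleGraph V) (K : Matrix V V ℝ) (hK : SPlus G K)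
    (Sg : Matrix V V ℝ) (hSg : Sg = K⁻¹)
    (A B S : Finset V) (hA : A.Nonempty) (hB : B.Nonempty)
    (hAB : Disjoint A B) (hAS : Disjoint A S) (hBS : Disjoint B S)
    (hsep : Separates G A B S) :
    msub Sg A B = msub Sg A S * (psub Sg S)⁻¹ * msub Sg S B :=
  stmt_12_general G K hK Sg hSg A B S hAS hsep
end
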